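/- arXiv:0909.3682 — 3 statements merged into one kernel-verified Lean document; each statement's English description precedes it below -/
import Mathlib

section
/- For all z > 0, ψ''(z) > -1/z² - 1/z³ - 1/(2z⁴), where ψ is the digamma function. -/
/-!
Differentiating the Weierstrass series `ψ(x) = -γ + ∑ₖ (1/(k+1) - 1/(x+k))` twice gives
`ψ''(x) = -2 ∑ₖ (x+k)⁻³`. With `G(t) = 1/(2t²) + 1/(2t³) + 1/(4t⁴)` one has
`G(t) - G(t+1) - t⁻³ = (2t+1) / (4t⁴(t+1)⁴) > 0`, so the series is dominated termwise by a
telescoping series with sum `G(x)`, and `-2 G(x)` is the claimed lower bound.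
-/

noncomputable def psi (z : ℝ) : ℝ := deriv (fun t => Real.log (Real.Gamma t)) z

open Real Filter Topology Set

lemma summable_inv_add_natCast_pow {a : ℝ} (ha : 0 < a) {p : ℕ} (hp : 1 < p) :
    Summable fun k : ℕ => ((a + k) ^ p)⁻¹ := by
  have h := (Real.summable_one_div_nat_add_rpow a p).mpr (by exact_mod_cast hp)
  refine h.congr fun k => ?_
  rw [abs_of_pos (by positivity), Real.rpow_natCast, one_div, add_comm]

lemma hasDerivAt_inv_add_pow (p : ℕ) (c : ℝ) {y : ℝ} (hy : y + c ≠ 0) :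
    HasDerivAt (fun t => ((t + c) ^ p)⁻¹) (-p * ((y + c) ^ (p + 1))⁻¹) y := by
  refine (((hasDerivAt_id' y).add_const c).fun_pow p |>.fun_inv (pow_ne_zero p hy)).congr_deriv ?_
  rcases p with _ | p
  · simp
  · rw [Nat.add_sub_cancel]
    field_simp
    ring

lemma hasDerivAt_tsum_inv_add_natCast_pow {p : ℕ} (hp : 1 < p) {x : ℝ} (hx : 0 < x) :
    HasDerivAt (fun y : ℝ => ∑' k : ℕ, ((y + k) ^ p)⁻¹)
      (-p * ∑' k : ℕ, ((x + k) ^ (p + 1))⁻¹) x := by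
  have ha : 0 < x / 2 := by positivity
  have hxa : x ∈ Ioi (x / 2) := half_lt_self hx
  rw [← tsum_mul_left]
  refine hasDerivAt_tsum_of_isPreconnected (g := fun (k : ℕ) (y : ℝ) => ((y + k) ^ p)⁻¹)
    ((summable_inv_add_natCast_pow ha (by omega : 1 < p + 1)).mul_left (p : ℝ)) isOpen_Ioi
    isPreconnected_Ioi
    (fun k y hy => hasDerivAt_inv_add_pow p k (by have := ha.trans hy; positivity))
    (fun k y hy => ?_) hxa (summable_inv_add_natCast_pow hx hp) hxa
  have hy' : x / 2 < y := hy
  have hy0 : 0 < y := ha.trans hy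
  rw [norm_mul, norm_neg, Real.norm_natCast, Real.norm_of_nonneg (by positivity)]
  gcongr

local notation "γ" => eulerMascheroniConstant

noncomputable def digammaSeries (x : ℝ) : ℝ :=
  -γ + ∑' k : ℕ, (((k : ℝ) + 1)⁻¹ - (x + k)⁻¹)

lemma abs_inv_succ_sub_inv_add_le {a y : ℝ} (ha : 0 < a) (ha1 : a ≤ 1) (hay : a ≤ y) (k : ℕ) :
    |((k : ℝ) + 1)⁻¹ - (y + k)⁻¹| ≤ |y - 1| * ((a + k) ^ 2)⁻¹ := by
  have hak : 0 < a + k := by positivity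
  have hyk : 0 < y + k := by linarith
  have hk : a + k ≤ k + 1 := by linarith
  rw [show ((k : ℝ) + 1)⁻¹ - (y + k)⁻¹ = (y - 1) * ((k + 1) * (y + k))⁻¹ by field_simp; ring,
    abs_mul, abs_of_pos (by positivity : (0 : ℝ) < ((k + 1) * (y + k))⁻¹), sq]
  gcongr

lemma tendstoUniformlyOn_sum_range_inv_succ_sub_inv_add {a b : ℝ} (ha : 0 < a) (ha1 : a ≤ 1) :
    TendstoUniformlyOn (fun (n : ℕ) (y : ℝ) => ∑ k ∈ Finset.range n, (((k : ℝ) + 1)⁻¹ - (y + k)⁻¹))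
      (fun y => ∑' k : ℕ, (((k : ℝ) + 1)⁻¹ - (y + k)⁻¹)) atTop (Ioo a b) := by
  refine tendstoUniformlyOn_tsum_nat ((summable_inv_add_natCast_pow ha one_lt_two).mul_left (b + 1))
    fun k y hy => ?_
  rw [Real.norm_eq_abs]
  refine (abs_inv_succ_sub_inv_add_le ha ha1 hy.1.le k).trans ?_
  gcongr
  rw [abs_le]
  constructor <;> linarith [hy.1, hy.2]

lemma tendsto_log_sub_sum_range_succ_inv :
    Tendsto (fun n : ℕ => log n - ∑ k ∈ Finset.range (n + 1), ((k : ℝ) + 1)⁻¹) atTop (𝓝 (-γ)) := by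
  have h := (tendsto_harmonic_sub_log.add tendsto_one_div_add_atTop_nhds_zero_nat).neg
  rw [add_zero] at h
  refine h.congr fun n => ?_
  push_cast [harmonic, Finset.sum_range_succ]
  ring

lemma hasDerivAt_logGammaSeq {x : ℝ} (hx : 0 < x) (n : ℕ) :
    HasDerivAt (fun y => BohrMollerup.logGammaSeq y n)
      (log n - ∑ m ∈ Finset.range (n + 1), (x + m)⁻¹) x := by
  have hlog : ∀ m ∈ Finset.range (n + 1), HasDerivAt (fun y => log (y + m)) (x + m)⁻¹ x :=
    fun m _ => by simpa using ((hasDerivAt_id' x).add_const (m : ℝ)).log (by positivity)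
  exact ((hasDerivAt_mul_const (log n)).add_const _).fun_sub (HasDerivAt.fun_sum hlog)

lemma hasDerivAt_log_Gamma {x : ℝ} (hx : 0 < x) :
    HasDerivAt (fun t => log (Gamma t)) (digammaSeries x) x := by
  set a := min x 1 / 2
  have ha : 0 < a := by positivity
  have ha1 : a ≤ 1 := by simp only [a]; linarith [min_le_right x 1]
  have hxs : x ∈ Ioo a (x + 1) := ⟨by simp only [a]; linarith [min_le_left x 1], by linarith⟩
  have hS := tendstoUniformlyOn_sum_range_inv_succ_sub_inv_add (b := x + 1) ha ha1
  have hS' : TendstoUniformlyOn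
      (fun (n : ℕ) (y : ℝ) => ∑ k ∈ Finset.range (n + 1), (((k : ℝ) + 1)⁻¹ - (y + k)⁻¹))
      (fun y => ∑' k : ℕ, (((k : ℝ) + 1)⁻¹ - (y + k)⁻¹)) atTop (Ioo a (x + 1)) :=
    fun u hu => (tendsto_add_atTop_nat 1).eventually (hS u hu)
  refine hasDerivAt_of_tendstoUniformlyOn (f := fun n y => BohrMollerup.logGammaSeq y n)
    isOpen_Ioo ?_ (Eventually.of_forall fun n y hy => hasDerivAt_logGammaSeq (ha.trans hy.1) n)
    (fun y hy => BohrMollerup.tendsto_log_gamma (ha.trans hy.1)) hxs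
  refine ((tendsto_log_sub_sum_range_succ_inv.tendstoUniformlyOn_const _).add hS').congr ?_
  filter_upwards with n y _
  simp only [Pi.add_apply, Finset.sum_sub_distrib]
  ring

lemma hasDerivAt_digammaSeries {x : ℝ} (hx : 0 < x) :
    HasDerivAt digammaSeries (∑' k : ℕ, ((x + k) ^ 2)⁻¹) x := by
  set a := min x 1 / 2
  have ha : 0 < a := by positivity
  have hxa : x ∈ Ioi a := by simp only [mem_Ioi, a]; linarith [min_le_left x 1]
  -- the series converges at `1`, where it vanishes termwise
  have h1a : (1 : ℝ) ∈ Ioi a := by simp only [mem_Ioi, a]; linarith [min_le_right x 1]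
  refine HasDerivAt.const_add _ <| hasDerivAt_tsum_of_isPreconnected
    (g := fun (k : ℕ) (y : ℝ) => ((k : ℝ) + 1)⁻¹ - (y + k)⁻¹)
    (g' := fun (k : ℕ) (y : ℝ) => ((y + k) ^ 2)⁻¹)
    (summable_inv_add_natCast_pow ha one_lt_two) isOpen_Ioi isPreconnected_Ioi
    (fun k y hy => ?_) (fun k y hy => ?_) h1a (by simp [add_comm]) hxa
  · have hy : 0 < y + k := by have := ha.trans hy; positivity
    simpa using (hasDerivAt_inv_add_pow 1 (k : ℝ) hy.ne').const_sub (((k : ℝ) + 1)⁻¹)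
  · have hy : a < y := hy
    rw [Real.norm_of_nonneg (by have := ha.trans hy; positivity)]
    gcongr

lemma psi_eq_digammaSeries {x : ℝ} (hx : 0 < x) : psi x = digammaSeries x :=
  (hasDerivAt_log_Gamma hx).deriv

lemma deriv_psi {x : ℝ} (hx : 0 < x) : deriv psi x = ∑' k : ℕ, ((x + k) ^ 2)⁻¹ := by
  have h : psi =ᶠ[𝓝 x] digammaSeries :=
    eventually_of_mem (Ioi_mem_nhds hx) fun y hy => psi_eq_digammaSeries hy
  rw [h.deriv_eq, (hasDerivAt_digammaSeries hx).deriv]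

lemma deriv_deriv_psi {x : ℝ} (hx : 0 < x) :
    deriv (deriv psi) x = -2 * ∑' k : ℕ, ((x + k) ^ 3)⁻¹ := by
  have h : deriv psi =ᶠ[𝓝 x] fun y => ∑' k : ℕ, ((y + k) ^ 2)⁻¹ :=
    eventually_of_mem (Ioi_mem_nhds hx) fun y hy => deriv_psi hy
  rw [h.deriv_eq, (hasDerivAt_tsum_inv_add_natCast_pow one_lt_two hx).deriv]
  norm_num

lemma tsum_lt_of_lt_sub_succ {f g : ℕ → ℝ} (hf : ∀ k, 0 ≤ f k) (hfg : ∀ k, f k < g k - g (k + 1))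
    (hg : Tendsto g atTop (𝓝 0)) : ∑' k, f k < g 0 := by
  have hsum : HasSum (fun k => g k - g (k + 1)) (g 0) := by
    rw [hasSum_iff_tendsto_nat_of_nonneg fun k => (hf k).trans (hfg k).le]
    simp_rw [Finset.sum_range_sub']
    simpa using (tendsto_const_nhds (x := g 0)).sub hg
  rw [← hsum.tsum_eq]
  exact Summable.tsum_lt_tsum_of_nonneg hf (fun k => (hfg k).le) (hfg 0) hsum.summable

lemma tsum_inv_add_natCast_pow_three_lt {x : ℝ} (hx : 0 < x) :
    ∑' k : ℕ, ((x + k) ^ 3)⁻¹ < (2 * x ^ 2)⁻¹ + (2 * x ^ 3)⁻¹ + (4 * x ^ 4)⁻¹ := by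
  set G : ℝ → ℝ := fun t => (2 * t ^ 2)⁻¹ + (2 * t ^ 3)⁻¹ + (4 * t ^ 4)⁻¹
  have hstep : ∀ t : ℝ, 0 < t → (t ^ 3)⁻¹ < G t - G (t + 1) := fun t ht => by
    have : G t - G (t + 1) - (t ^ 3)⁻¹ = (2 * t + 1) / (4 * t ^ 4 * (t + 1) ^ 4) := by
      simp only [G]
      field_simp
      ring
    linarith [show 0 < (2 * t + 1) / (4 * t ^ 4 * (t + 1) ^ 4) by positivity]
  have hG : Tendsto G atTop (𝓝 0) := by
    have h : ∀ n ≠ 0, ∀ c : ℝ, 0 < c → Tendsto (fun t : ℝ => (c * t ^ n)⁻¹) atTop (𝓝 0) :=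
      fun n hn c hc => ((tendsto_pow_atTop hn).const_mul_atTop hc).inv_tendsto_atTop
    have := ((h 2 two_ne_zero 2 two_pos).add (h 3 three_ne_zero 2 two_pos)).add
      (h 4 four_ne_zero 4 four_pos)
    rwa [add_zero, add_zero] at this
  simpa [G] using tsum_lt_of_lt_sub_succ (g := fun k : ℕ => G (x + k)) (fun k => by positivity)
    (fun k => by simpa [add_assoc] using hstep (x + k) (by positivity))
    (hG.comp (tendsto_atTop_add_const_left _ x tendsto_natCast_atTop_atTop))

theorem stmt_4 (z : ℝ) (hz : 0 < z) :
    deriv (deriv psi) z > -(1 / z ^ 2) - 1 / z ^ 3 - 1 / (2 * z ^ 4) := by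
  have h := tsum_inv_add_natCast_pow_three_lt hz
  have hbound : -(1 / z ^ 2) - 1 / z ^ 3 - 1 / (2 * z ^ 4)
      = -2 * ((2 * z ^ 2)⁻¹ + (2 * z ^ 3)⁻¹ + (4 * z ^ 4)⁻¹) := by
    field_simp
    ring
  rw [deriv_deriv_psi hz, hbound]
  linarith
end

section
/- Define h(x,y) = (1/(x+y+1))·[x + x(x+1)/(2(x+y))] − ψ(x+y+1) + ψ(y+1). For fixed y > 0, the function x ↦ h(x,y) is strictly decreasing on [1/√2, ∞). -/
noncomputable def h (x y : ℝ) : ℝ :=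
  (1 / (x + y + 1)) * (x + x * (x + 1) / (2 * (x + y))) - psi (x + y + 1) + psi (y + 1)

/-!
Put `z = x + y + 1` and `φ(z) = ψ(z) - log z + 1/(2z)` (`psiRemainder`). Then
`h(x, y) = g(x) - φ(z) + ψ(y + 1)` with `g` (`hApprox`) elementary, and a direct computation shows
`g' < 0` for `x > 1/√2`; so it suffices that `φ` is nondecreasing. By `ψ(z + 1) = ψ(z) + 1/z`, the
increment `φ(z + 1) - φ(z)` is the error `E(z)` of the trapezoidal rule for `∫_z^{z+1} dt/t`, and
`E'(z) = -(1/z - 1/(z+1))² / 2 ≤ 0`. Convexity of `log Γ` squeezes `ψ(z)` between `log z - 1/z` and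
`log z`, so `φ → 0`; for `a < b` the differences `φ(b + n) - φ(a + n)` then decrease in `n` to `0`,
hence `φ(a) ≤ φ(b)`.
-/

open Real Set Filter Topology

lemma differentiableAt_log_Gamma {x : ℝ} (hx : 0 < x) : DifferentiableAt ℝ (log ∘ Gamma) x :=
  (differentiableAt_Gamma fun m => by linarith [(m.cast_nonneg : (0 : ℝ) ≤ m)]).log
    (Gamma_pos_of_pos hx).ne'

lemma log_Gamma_add_one {x : ℝ} (hx : 0 < x) : log (Gamma (x + 1)) = log (Gamma x) + log x := by
  rw [Gamma_add_one hx.ne', log_mul hx.ne' (Gamma_pos_of_pos hx).ne', add_comm]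

lemma psi_add_one {x : ℝ} (hx : 0 < x) : psi (x + 1) = psi x + x⁻¹ := by
  have hrec : (fun t => log (Gamma (t + 1))) =ᶠ[𝓝 x] fun t => log (Gamma t) + log t := by
    filter_upwards [eventually_gt_nhds hx] with t ht using log_Gamma_add_one ht
  rw [psi, psi, ← deriv_comp_add_const, hrec.deriv_eq, ← deriv_log]
  exact deriv_add (differentiableAt_log_Gamma hx) (differentiableAt_log hx.ne')

lemma psi_le_log {x : ℝ} (hx : 0 < x) : psi x ≤ log x := by
  have := convexOn_log_Gamma.deriv_le_slope (mem_Ioi.2 hx) (mem_Ioi.2 (by linarith : 0 < x + 1))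
    (by linarith) (differentiableAt_log_Gamma hx)
  rwa [slope_def_field, add_sub_cancel_left, div_one, Function.comp_apply, Function.comp_apply,
    log_Gamma_add_one hx, add_sub_cancel_left] at this

lemma log_le_psi_add_one {x : ℝ} (hx : 0 < x) : log x ≤ psi (x + 1) := by
  have := convexOn_log_Gamma.slope_le_deriv (mem_Ioi.2 hx) (mem_Ioi.2 (by linarith : 0 < x + 1))
    (by linarith) (differentiableAt_log_Gamma (by linarith : 0 < x + 1))
  rwa [slope_def_field, add_sub_cancel_left, div_one, Function.comp_apply, Function.comp_apply,
    log_Gamma_add_one hx, add_sub_cancel_left] at this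

lemma abs_psi_sub_log_le {x : ℝ} (hx : 0 < x) : |psi x - log x| ≤ x⁻¹ := by
  have hlow := log_le_psi_add_one hx
  rw [psi_add_one hx] at hlow
  rw [abs_le]
  constructor <;> linarith [psi_le_log hx]

lemma tendsto_psi_sub_log_atTop : Tendsto (fun x => psi x - log x) atTop (𝓝 0) := by
  refine squeeze_zero_norm' ?_ tendsto_inv_atTop_zero
  filter_upwards [eventually_gt_atTop 0] with x hx using abs_psi_sub_log_le hx

noncomputable def trapezoidError (c : ℝ) : ℝ := (c⁻¹ + (c + 1)⁻¹) / 2 - (log (c + 1) - log c)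

lemma hasDerivAt_trapezoidError {c : ℝ} (hc : 0 < c) :
    HasDerivAt trapezoidError (-(c⁻¹ - (c + 1)⁻¹) ^ 2 / 2) c := by
  have hc1 : 0 < c + 1 := by linarith
  have hshift : HasDerivAt (fun x : ℝ => x + 1) 1 c := (hasDerivAt_id c).add_const 1
  have hd : HasDerivAt trapezoidError
      ((-(c ^ 2)⁻¹ + -((c + 1) ^ 2)⁻¹ * 1) / 2 - (1 / (c + 1) - c⁻¹)) c :=
    (((hasDerivAt_inv hc.ne').add ((hasDerivAt_inv hc1.ne').comp c hshift)).div_const 2).sub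
      ((hshift.log hc1.ne').sub (hasDerivAt_log hc.ne'))
  refine hd.congr_deriv ?_
  field_simp
  ring

lemma antitoneOn_trapezoidError : AntitoneOn trapezoidError (Ioi 0) := by
  refine antitoneOn_of_hasDerivWithinAt_nonpos (convex_Ioi 0)
    (fun c hc => (hasDerivAt_trapezoidError hc).continuousAt.continuousWithinAt)
    (fun c hc => (hasDerivAt_trapezoidError ?_).hasDerivWithinAt) (fun c _ => ?_)
  · simpa using hc
  · have := sq_nonneg (c⁻¹ - (c + 1)⁻¹)
    linarith

noncomputable def psiRemainder (z : ℝ) : ℝ := psi z - log z + z⁻¹ / 2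

lemma psiRemainder_add_one {z : ℝ} (hz : 0 < z) :
    psiRemainder (z + 1) = psiRemainder z + trapezoidError z := by
  rw [psiRemainder, psiRemainder, trapezoidError, psi_add_one hz]
  ring

lemma tendsto_psiRemainder_atTop : Tendsto psiRemainder atTop (𝓝 0) := by
  have h := tendsto_psi_sub_log_atTop.add (tendsto_inv_atTop_zero.div_const 2)
  rwa [zero_div, add_zero] at h

lemma monotoneOn_psiRemainder : MonotoneOn psiRemainder (Ioi 0) := by
  intro a (ha : 0 < a) b (hb : 0 < b) hab
  set d : ℕ → ℝ := fun n => psiRemainder (b + n) - psiRemainder (a + n)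
  have hd : Antitone d := antitone_nat_of_succ_le fun n => by
    have := antitoneOn_trapezoidError (mem_Ioi.2 (by positivity : 0 < a + n))
      (mem_Ioi.2 (by positivity : 0 < b + n)) (by linarith)
    simp only [d, Nat.cast_succ, ← add_assoc, psiRemainder_add_one (by positivity : 0 < a + n),
      psiRemainder_add_one (by positivity : 0 < b + n)]
    linarith
  have hlim : Tendsto d atTop (𝓝 0) := by
    have shift (c : ℝ) := tendsto_psiRemainder_atTop.comp
      (tendsto_atTop_add_const_left atTop c tendsto_natCast_atTop_atTop)
    simpa using (shift b).sub (shift a)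
  simpa [d] using hd.le_of_tendsto hlim 0

noncomputable def hApprox (x y : ℝ) : ℝ :=
  (1 / (x + y + 1)) * (x + x * (x + 1) / (2 * (x + y))) - log (x + y + 1) + (x + y + 1)⁻¹ / 2

lemma h_eq_hApprox_sub_psiRemainder (x y : ℝ) :
    h x y = hApprox x y - psiRemainder (x + y + 1) + psi (y + 1) := by
  rw [h, hApprox, psiRemainder]
  ring

lemma hasDerivAt_hApprox {x y : ℝ} (hxy : 0 < x + y) :
    HasDerivAt (fun x => hApprox x y)
      (-(4 * x ^ 3 + 2 * x ^ 2 + 2 * y * (2 * x ^ 2 - 1)) / (4 * (x + y) ^ 2 * (x + y + 1) ^ 2))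
      x := by
  have hz : 0 < x + y + 1 := by linarith
  have hs : HasDerivAt (fun x => x + y) 1 x := (hasDerivAt_id x).add_const y
  have hz' : HasDerivAt (fun x => x + y + 1) 1 x := hs.add_const 1
  have hd : HasDerivAt (fun x => hApprox x y) _ x :=
    ((((hasDerivAt_const x (1 : ℝ)).div hz' hz.ne').mul ((hasDerivAt_id' x).add
      (((hasDerivAt_id' x).mul ((hasDerivAt_id' x).add_const 1)).div (hs.const_mul 2)
        (by positivity)))).sub (hz'.log hz.ne')).add ((hz'.inv hz.ne').div_const 2)
  refine hd.congr_deriv ?_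
  simp only [Pi.add_apply, Pi.mul_apply, Pi.div_apply]
  field_simp
  ring

lemma strictAntiOn_hApprox {y : ℝ} (hy : 0 ≤ y) :
    StrictAntiOn (fun x => hApprox x y) (Ici (1 / √2)) := by
  have hpos {x : ℝ} (hx : 1 / √2 ≤ x) : 0 < x := (by positivity : (0 : ℝ) < 1 / √2).trans_le hx
  refine strictAntiOn_of_deriv_neg (convex_Ici _)
    (fun x hx => (hasDerivAt_hApprox (by linarith [hpos hx])).continuousAt.continuousWithinAt)
    (fun x hx => ?_)
  rw [interior_Ici] at hx
  have hx0 := hpos hx.le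
  have hx2 : 0 < 2 * x ^ 2 - 1 := by
    have := (div_lt_iff₀ (sqrt_pos.2 two_pos)).1 hx
    nlinarith [sq_sqrt zero_le_two]
  have hnum : 0 < 4 * x ^ 3 + 2 * x ^ 2 + 2 * y * (2 * x ^ 2 - 1) := by positivity
  rw [(hasDerivAt_hApprox (by linarith)).deriv]
  exact div_neg_of_neg_of_pos (neg_neg_of_pos hnum) (by positivity)

theorem stmt_5 (y : ℝ) (hy : 0 < y) :
    StrictAntiOn (fun x => h x y) (Set.Ici (1 / Real.sqrt 2)) := by
  intro a ha b hb hab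
  have ha0 : 0 < a := (by positivity : (0 : ℝ) < 1 / √2).trans_le ha
  have hrem := monotoneOn_psiRemainder (mem_Ioi.2 (by positivity : 0 < a + y + 1))
    (mem_Ioi.2 (by linarith : 0 < b + y + 1)) (by linarith)
  simp only [h_eq_hApprox_sub_psiRemainder]
  linarith [strictAntiOn_hApprox hy.le ha hb hab]
end

section
/- Define u(x,y) = h(x,y)/x where h(x,y) = (1/(x+y+1))·[x + x(x+1)/(2(x+y))] − ψ(x+y+1) + ψ(y+1). For all y > 0 and 0 < x ≤ 1/√2, u(x,y) > 0, and hence h(x,y) > 0. -/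
noncomputable def u (x y : ℝ) : ℝ := h x y / x

open Real Set Filter Topology

theorem ge_of_tendsto_of_forall_add_one_le {f b : ℝ → ℝ} {c t : ℝ}
    (hf : ∀ s ≥ t, f (s + 1) ≤ f s) (hb : ∀ s ≥ t, b s ≤ f s) (hlim : Tendsto b atTop (𝓝 c)) :
    c ≤ f t := by
  have hshift : ∀ n : ℕ, t ≤ t + n := fun n => le_add_of_nonneg_right n.cast_nonneg
  have hdecr : ∀ n : ℕ, f (t + n) ≤ f t := by
    intro n
    induction n with
    | zero => simp
    | succ n ih =>
      rw [Nat.cast_succ, ← add_assoc]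
      exact (hf _ (hshift n)).trans ih
  have hto : Tendsto (fun n : ℕ => t + n) atTop atTop :=
    tendsto_atTop_add_const_left _ _ tendsto_natCast_atTop_atTop
  exact le_of_tendsto (hlim.comp hto)
    (Eventually.of_forall fun n => (hb _ (hshift n)).trans (hdecr n))

theorem differentiableAt_log_Gamma_s12 {z : ℝ} (hz : 0 < z) :
    DifferentiableAt ℝ (fun t => log (Gamma t)) z :=
  (differentiableAt_Gamma fun m => ((neg_nonpos.mpr m.cast_nonneg).trans_lt hz).ne').log
    (Gamma_pos_of_pos hz).ne'

theorem psi_add_one_s12 {z : ℝ} (hz : 0 < z) : psi (z + 1) = psi z + 1 / z := by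
  have hrec : (fun t => log (Gamma t) + log t) =ᶠ[𝓝 z] fun t => log (Gamma (t + 1)) := by
    filter_upwards [eventually_gt_nhds hz] with t ht
    rw [Gamma_add_one ht.ne', log_mul ht.ne' (Gamma_pos_of_pos ht).ne', add_comm]
  rw [psi, ← deriv_comp_add_const, ← hrec.deriv_eq,
    deriv_fun_add (differentiableAt_log_Gamma_s12 hz) (differentiableAt_log hz.ne'), deriv_log, one_div,
    psi]

theorem psi_monotoneOn : MonotoneOn psi (Ioi 0) :=
  convexOn_log_Gamma.monotoneOn_deriv fun _ hz => differentiableAt_log_Gamma_s12 hz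

theorem h_sub_h_add_one {x y : ℝ} (hy : 0 < y + 1) (hxy : 0 < x + y) :
    h x y - h x (y + 1) =
      x * (x + 1) * (1 - x) / ((x + y) * (x + y + 1) * (x + y + 2) * (y + 1)) := by
  have hxy1 : 0 < x + y + 1 := by linarith
  rw [h, h, show x + (y + 1) = x + y + 1 by ring, psi_add_one_s12 hxy1, psi_add_one_s12 hy]
  field_simp
  ring

theorem neg_inv_le_h {x y : ℝ} (hx0 : 0 ≤ x) (hx1 : x ≤ 1) (hy : 0 < y) :
    -(1 / (y + 1)) ≤ h x y := by
  have hpsi : psi (x + y + 1) ≤ psi (y + 1 + 1) :=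
    psi_monotoneOn (by simp only [mem_Ioi]; linarith) (by simp only [mem_Ioi]; linarith)
      (by linarith)
  rw [psi_add_one_s12 (z := y + 1) (by linarith)] at hpsi
  have hmaj : 0 ≤ (1 / (x + y + 1)) * (x + x * (x + 1) / (2 * (x + y))) := by positivity
  rw [h]
  linarith

theorem stmt_12 (x y : ℝ) (hy : 0 < y) (hx0 : 0 < x) (hx : x ≤ 1 / Real.sqrt 2) :
    0 < u x y ∧ 0 < h x y := by
  have hx1 : x < 1 :=
    hx.trans_lt ((div_lt_one (by positivity)).mpr one_lt_sqrt_two)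
  have hdrop : ∀ s ≥ y, 0 < h x s - h x (s + 1) := by
    intro s hs
    have : 0 < 1 - x := sub_pos.mpr hx1
    rw [h_sub_h_add_one (by linarith) (by linarith)]
    have : 0 < s := by linarith
    positivity
  have hlim : Tendsto (fun s : ℝ => -(1 / (s + 1))) atTop (𝓝 0) := by
    have hshift := tendsto_atTop_add_const_right atTop (1 : ℝ) tendsto_id
    simpa using (tendsto_inv_atTop_zero.comp hshift).neg
  have hnext : 0 ≤ h x (y + 1) :=
    ge_of_tendsto_of_forall_add_one_le (fun s hs => (sub_pos.mp (hdrop s (by linarith))).le)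
      (fun s hs => neg_inv_le_h hx0.le hx1.le (by linarith)) hlim
  have hpos : 0 < h x y := hnext.trans_lt (sub_pos.mp (hdrop y le_rfl))
  exact ⟨div_pos hpos hx0, hpos⟩
end
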